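/- arXiv:1612.07015 — 2 statements merged into one kernel-verified Lean document; each statement's English description precedes it below -/
import Mathlib

section
/- Let N be a nondeterministic unitary OBDD of width d computing f with variable order π, and let S = {(σ¹,γ¹),...,(σ^r,γ^r)} be a strong 1-fooling set for f at level k. Then the quantum states ψ(σ¹), ..., ψ(σ^r) reached after reading σ¹, ..., σ^r are linearly independent vectors in ℂ^d; in particular d ≥ r. -/
open scoped BigOperators

/-- State of a nondeterministic unitary OBDD of width `d` after reading input `x`
in variable order `π`: at step `j` the unitary `U j b` is applied, where `b` is the
value of the tested variable `x_{π j}`. -/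
noncomputable def nuRun {n d : ℕ} (U : Fin n → Bool → Matrix (Fin d) (Fin d) ℂ)
    (π : Equiv.Perm (Fin n)) (init : Fin d → ℂ) (x : Fin n → Bool) : Fin d → ℂ :=
  (List.ofFn fun j : Fin n => U j (x (π j))).foldl (fun v M => M.mulVec v) init

/-- All transition matrices are unitary. -/
def IsUnitaryFamily {n d : ℕ} (U : Fin n → Bool → Matrix (Fin d) (Fin d) ℂ) : Prop :=
  ∀ j b, U j b ∈ Matrix.unitaryGroup (Fin d) ℂ

/-- The initial state is a unit vector. -/
def NormalizedInit {d : ℕ} (init : Fin d → ℂ) : Prop :=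
  ∑ q, ‖init q‖ ^ 2 = 1

/-- Nondeterministic acceptance: the projection of the final state onto the
accepting subspace (spanned by the accepting basis states `acc`) is nonzero. -/
def nuAccepts {n d : ℕ} (U : Fin n → Bool → Matrix (Fin d) (Fin d) ℂ)
    (π : Equiv.Perm (Fin n)) (init : Fin d → ℂ) (acc : Finset (Fin d))
    (x : Fin n → Bool) : Prop :=
  ∃ q ∈ acc, nuRun U π init x q ≠ 0

/-- The NUOBDD computes `f`: it accepts exactly the inputs in `f⁻¹(1)`. -/
def nuComputes {n d : ℕ} (U : Fin n → Bool → Matrix (Fin d) (Fin d) ℂ)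
    (π : Equiv.Perm (Fin n)) (init : Fin d → ℂ) (acc : Finset (Fin d))
    (f : (Fin n → Bool) → Bool) : Prop :=
  ∀ x, nuAccepts U π init acc x ↔ f x = true

/-- Number of 1s in the input. -/
def countOnes {n : ℕ} (x : Fin n → Bool) : ℕ :=
  (Finset.univ.filter fun i => x i = true).card

/-- Combine a partial assignment `σ` on the first `k` variables in order `π`
(variable `π j` gets value `σ j` for `j < k`) with an assignment `γ` on the
remaining `n - k` variables, producing a full input in `{0,1}^n`. -/
def combine {n : ℕ} (k : ℕ) (hk : k ≤ n) (π : Equiv.Perm (Fin n))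
    (σ : Fin k → Bool) (γ : Fin (n - k) → Bool) : Fin n → Bool :=
  fun i =>
    if h : ((π.symm i : Fin n) : ℕ) < k then σ ⟨((π.symm i : Fin n) : ℕ), h⟩
    else γ ⟨((π.symm i : Fin n) : ℕ) - k, by
      have h1 : ((π.symm i : Fin n) : ℕ) < n := (π.symm i).isLt
      omega⟩

/-- A strong 1-fooling set for `f` at level `k` under order `π`: every pair
`(σ, γ)` satisfies `f(σγ) = 1`, and for distinct pairs `(σ, γ)`, `(σ', γ')` we
have `f(σγ') = 0` and `f(σ'γ) = 0`. -/
def IsStrongFoolingSet {n : ℕ} (k : ℕ) (hk : k ≤ n)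
    (f : (Fin n → Bool) → Bool) (π : Equiv.Perm (Fin n))
    (S : Finset ((Fin k → Bool) × (Fin (n - k) → Bool))) : Prop :=
  (∀ p ∈ S, f (combine k hk π p.1 p.2) = true) ∧
  (∀ p ∈ S, ∀ q ∈ S, p ≠ q →
    f (combine k hk π p.1 q.2) = false ∧ f (combine k hk π q.1 p.2) = false)

/-- The quantum state of the NUOBDD after the first `k` steps, reading the partial
assignment `σ` on the first `k` tested variables. -/
noncomputable def nuRunPrefix {n d : ℕ} (k : ℕ) (hk : k ≤ n)
    (U : Fin n → Bool → Matrix (Fin d) (Fin d) ℂ)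
    (init : Fin d → ℂ) (σ : Fin k → Bool) : Fin d → ℂ :=
  (List.ofFn fun j : Fin k => U (Fin.castLE hk j) (σ j)).foldl
    (fun v M => M.mulVec v) init

/-!
Reading `γ` on the last `n - k` levels acts on the state `ψ(σ)` by a fixed matrix `U(γ)`,
so `σγ` is accepted iff some accepting coordinate of `U(γ) ψ(σ)` is nonzero. Pick such a
coordinate `q_j` for `σʲγʲ`: the linear form `v ↦ (U(γʲ) v)_{q_j}` is nonzero at `ψ(σʲ)` and
vanishes at every `ψ(σⁱ)` with `i ≠ j`, because `σⁱγʲ` is rejected. A family admitting such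
dual forms is linearly independent, and `r ≤ d` follows by counting dimensions.
-/

open Matrix

theorem List.ofFn_eq_ofFn_castLE_append {α : Type*} {n k : ℕ} (hk : k ≤ n) (g : Fin n → α) :
    List.ofFn g = List.ofFn (fun j : Fin k => g (Fin.castLE hk j)) ++
      List.ofFn (fun j : Fin (n - k) => g ⟨k + j, by omega⟩) := by
  rw [List.ofFn_congr (Nat.add_sub_of_le hk).symm, List.ofFn_add]
  rfl

theorem List.foldl_mulVec_eq_prod_mulVec {m R : Type*} [Fintype m] [DecidableEq m]
    [CommSemiring R] (l : List (Matrix m m R)) (v : m → R) :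
    l.foldl (fun v M => M *ᵥ v) v = l.reverse.prod *ᵥ v := by
  induction l generalizing v with
  | nil => simp
  | cons M l ih => simp [ih, Matrix.mulVec_mulVec]

theorem LinearIndependent.of_pairwise_dual_eq_zero_of_ne_zero {ι K V : Type*} [Field K]
    [AddCommGroup V] [Module K V] (v : ι → V) (f : ι → Module.Dual K V)
    (h0 : Pairwise fun i j ↦ f i (v j) = 0) (hne : ∀ i, f i (v i) ≠ 0) :
    LinearIndependent K v :=
  .of_pairwise_dual_eq_zero_one v (fun i ↦ (f i (v i))⁻¹ • f i)
    (fun i j hij ↦ by simp [h0 hij]) (fun i ↦ by simp [hne i])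

@[simp]
theorem combine_apply_castLE {n k : ℕ} (hk : k ≤ n) (π : Equiv.Perm (Fin n))
    (σ : Fin k → Bool) (γ : Fin (n - k) → Bool) (j : Fin k) :
    combine k hk π σ γ (π (Fin.castLE hk j)) = σ j := by
  simp [combine]

@[simp]
theorem combine_apply_add {n k : ℕ} (hk : k ≤ n) (π : Equiv.Perm (Fin n))
    (σ : Fin k → Bool) (γ : Fin (n - k) → Bool) (j : Fin (n - k)) :
    combine k hk π σ γ (π ⟨k + j, by omega⟩) = γ j := by
  simp [combine]

/-- The paper's `U(γ) = U_n(γ_{n-k}) ⋯ U_{k+1}(γ_1)`. -/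
noncomputable def nuSuffixMatrix {n d : ℕ} (k : ℕ)
    (U : Fin n → Bool → Matrix (Fin d) (Fin d) ℂ) (γ : Fin (n - k) → Bool) :
    Matrix (Fin d) (Fin d) ℂ :=
  (List.ofFn fun j : Fin (n - k) => U ⟨k + j, by omega⟩ (γ j)).reverse.prod

theorem nuRun_combine {n d : ℕ} (k : ℕ) (hk : k ≤ n)
    (U : Fin n → Bool → Matrix (Fin d) (Fin d) ℂ) (π : Equiv.Perm (Fin n))
    (init : Fin d → ℂ) (σ : Fin k → Bool) (γ : Fin (n - k) → Bool) :
    nuRun U π init (combine k hk π σ γ) =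
      nuSuffixMatrix k U γ *ᵥ nuRunPrefix k hk U init σ := by
  rw [nuRun, List.ofFn_eq_ofFn_castLE_append hk, List.foldl_append,
    List.foldl_mulVec_eq_prod_mulVec]
  simp [nuRunPrefix, nuSuffixMatrix]

theorem nuAccepts_combine_iff {n d : ℕ} (k : ℕ) (hk : k ≤ n)
    (U : Fin n → Bool → Matrix (Fin d) (Fin d) ℂ) (π : Equiv.Perm (Fin n))
    (init : Fin d → ℂ) (acc : Finset (Fin d)) (σ : Fin k → Bool) (γ : Fin (n - k) → Bool) :
    nuAccepts U π init acc (combine k hk π σ γ) ↔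
      ∃ q ∈ acc, (nuSuffixMatrix k U γ *ᵥ nuRunPrefix k hk U init σ) q ≠ 0 := by
  rw [nuAccepts, nuRun_combine]

theorem nuobdd_foolingSet_states_linearIndependent_general
    (n d k r : ℕ) (hk : k ≤ n)
    (f : (Fin n → Bool) → Bool)
    (U : Fin n → Bool → Matrix (Fin d) (Fin d) ℂ)
    (π : Equiv.Perm (Fin n)) (init : Fin d → ℂ)
    (acc : Finset (Fin d))
    (hcomp : nuComputes U π init acc f)
    (σ : Fin r → Fin k → Bool) (γ : Fin r → Fin (n - k) → Bool)
    (h1 : ∀ i, f (combine k hk π (σ i) (γ i)) = true)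
    (h0 : ∀ i j, i ≠ j → f (combine k hk π (σ i) (γ j)) = false) :
    LinearIndependent ℂ (fun i => nuRunPrefix k hk U init (σ i)) ∧ r ≤ d := by
  set ψ := fun i => nuRunPrefix k hk U init (σ i)
  have accepts (i j : Fin r) :
      (∃ q ∈ acc, (nuSuffixMatrix k U (γ j) *ᵥ ψ i) q ≠ 0) ↔ i = j := by
    rw [← nuAccepts_combine_iff, hcomp]
    by_cases hij : i = j
    · simp [hij, h1]
    · simp [hij, h0 i j hij]
  choose q hq_acc hq_ne using fun j ↦ (accepts j j).2 rfl
  let φ (j : Fin r) : Module.Dual ℂ (Fin d → ℂ) :=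
    (LinearMap.proj (q j)).comp (nuSuffixMatrix k U (γ j)).mulVecLin
  have hψ : LinearIndependent ℂ ψ := by
    refine .of_pairwise_dual_eq_zero_of_ne_zero ψ φ (fun j i hji ↦ ?_) hq_ne
    by_contra hne
    exact hji ((accepts i j).1 ⟨q j, hq_acc j, hne⟩).symm
  exact ⟨hψ, by simpa using hψ.fintype_card_le_finrank⟩

/-- If `N` is a nondeterministic unitary OBDD of width `d` computing `f` with
order `π`, and `(σ¹,γ¹),…,(σ^r,γ^r)` form a strong 1-fooling set for `f` at
level `k`, then the states `ψ(σ¹),…,ψ(σ^r)` reached after reading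
`σ¹,…,σ^r` are linearly independent in `ℂ^d`; in particular `d ≥ r`. -/
theorem nuobdd_foolingSet_states_linearIndependent
    (n d k r : ℕ) (hk : k ≤ n)
    (f : (Fin n → Bool) → Bool)
    (U : Fin n → Bool → Matrix (Fin d) (Fin d) ℂ)
    (hU : IsUnitaryFamily U)
    (π : Equiv.Perm (Fin n)) (init : Fin d → ℂ) (hinit : NormalizedInit init)
    (acc : Finset (Fin d))
    (hcomp : nuComputes U π init acc f)
    (σ : Fin r → Fin k → Bool) (γ : Fin r → Fin (n - k) → Bool)
    (hinj : Function.Injective fun i => (σ i, γ i))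
    (h1 : ∀ i, f (combine k hk π (σ i) (γ i)) = true)
    (h0 : ∀ i j, i ≠ j → f (combine k hk π (σ i) (γ j)) = false) :
    LinearIndependent ℂ (fun i => nuRunPrefix k hk U init (σ i)) ∧ r ≤ d :=
  nuobdd_foolingSet_states_linearIndependent_general n d k r hk f U π init acc hcomp σ γ h1 h0
end

section
/- For every n and every k with 0 ≤ k ≤ n, the width of any nondeterministic unitary OBDD computing EXACT_n^k (the function that is 1 iff the input has exactly k ones) is at least max{k+1, n−k+1}. -/
open scoped BigOperators

/-- `EXACT_n^k(σ) = 1` iff `σ` has exactly `k` ones. -/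
def EXACT (n k : ℕ) (x : Fin n → Bool) : Bool := decide (countOnes x = k)

/-!
Read the input in the machine's variable order and, for `r ≤ j`, let `s_j(r)` be the state
after `j` steps on the input whose first `r` bits (in reading order) are 1 and the others 0.
For `j ≤ k` the vectors `s_j(0), …, s_j(j)` are linearly independent, so `k + 1 ≤ d`.
Induction on `j`: for `r ≤ j`, `s_{j+1}(r)` is the image of `s_j(r)` under the injective map
`U_j(0)`; and `s_{j+1}(j+1)` is outside their span, because setting the bits `j+1, …, k-1`
to 1 produces exactly `k` ones only for `r = j + 1`, so some accepting amplitude, a linear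
functional of the state after `j + 1` steps, vanishes on the `s_{j+1}(r)` with `r ≤ j` but not
on `s_{j+1}(j+1)`. Exchanging 0 and 1 turns `EXACT_n^k` into `EXACT_n^{n-k}`, whence
`n - k + 1 ≤ d`.
-/

open Finset
open scoped Matrix

theorem Matrix.foldl_mulVec_eq_prod_reverse_mulVec {ι R : Type*} [Fintype ι] [DecidableEq ι]
    [Semiring R] (L : List (Matrix ι ι R)) (v : ι → R) :
    L.foldl (fun v M => M *ᵥ v) v = L.reverse.prod *ᵥ v := by
  induction L generalizing v with
  | nil => simp
  | cons M L ih => simp [ih, Matrix.mulVec_mulVec]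

theorem List.take_ofFn_congr {α : Type*} {n m : ℕ} {f g : Fin n → α}
    (h : ∀ i : Fin n, (i : ℕ) < m → f i = g i) : (List.ofFn f).take m = (List.ofFn g).take m := by
  refine List.ext_getElem (by simp) fun i hi _ => ?_
  simp only [List.length_take, List.length_ofFn] at hi
  simpa using h ⟨i, by omega⟩ (by simp; omega)

theorem List.drop_ofFn_congr {α : Type*} {n m : ℕ} {f g : Fin n → α}
    (h : ∀ i : Fin n, m ≤ (i : ℕ) → f i = g i) : (List.ofFn f).drop m = (List.ofFn g).drop m := by
  refine List.ext_getElem (by simp) fun i hi _ => ?_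
  simp only [List.length_drop, List.length_ofFn] at hi
  simpa using h ⟨m + i, by omega⟩ (by simp)

section Counting

variable {n : ℕ}

def onesOn (s : Finset ℕ) : Fin n → Bool := fun i => decide ((i : ℕ) ∈ s)

theorem countOnes_onesOn {s : Finset ℕ} (hs : ∀ i ∈ s, i < n) :
    countOnes (onesOn s : Fin n → Bool) = s.card := by
  rw [countOnes, ← Finset.card_map Fin.valEmbedding]
  congr 1
  ext i
  simp only [onesOn, mem_map, mem_filter, mem_univ, true_and, decide_eq_true_eq,
    Fin.valEmbedding_apply]
  exact ⟨fun ⟨a, ha, hai⟩ => hai ▸ ha, fun hi => ⟨⟨i, hs i hi⟩, hi, rfl⟩⟩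

theorem countOnes_comp_perm (x : Fin n → Bool) (σ : Equiv.Perm (Fin n)) :
    countOnes (x ∘ σ) = countOnes x := by
  rw [countOnes, countOnes, ← Fintype.card_subtype, ← Fintype.card_subtype]
  exact Fintype.card_congr (σ.subtypeEquiv fun _ => Iff.rfl)

theorem countOnes_not (x : Fin n → Bool) : countOnes (fun i => !x i) = n - countOnes x := by
  have hcompl : (univ.filter fun i => (!x i) = true) = (univ.filter fun i => x i = true)ᶜ := by
    ext i
    simp
  rw [countOnes, countOnes, hcompl, card_compl, Fintype.card_fin]

theorem countOnes_le (x : Fin n → Bool) : countOnes x ≤ n :=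
  (card_filter_le _ _).trans_eq (card_fin n)

end Counting

section Run

variable {n d : ℕ} (U : Fin n → Bool → Matrix (Fin d) (Fin d) ℂ)

/-- `y j` is the bit read at step `j`, i.e. `y = x ∘ π` for the input `x`. -/
noncomputable def stepMatrices (y : Fin n → Bool) : List (Matrix (Fin d) (Fin d) ℂ) :=
  List.ofFn fun j => U j (y j)

noncomputable def prefixState (init : Fin d → ℂ) (y : Fin n → Bool) (m : ℕ) : Fin d → ℂ :=
  ((stepMatrices U y).take m).reverse.prod *ᵥ init

noncomputable def suffixMatrix (y : Fin n → Bool) (m : ℕ) : Matrix (Fin d) (Fin d) ℂ :=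
  ((stepMatrices U y).drop m).reverse.prod

theorem nuRun_comp_symm (π : Equiv.Perm (Fin n)) (init : Fin d → ℂ) (y : Fin n → Bool) (m : ℕ) :
    nuRun U π init (y ∘ π.symm) = suffixMatrix U y m *ᵥ prefixState U init y m := by
  have hsteps : (List.ofFn fun j => U j ((y ∘ π.symm) (π j))) = stepMatrices U y := by
    simp [stepMatrices]
  rw [nuRun, hsteps, Matrix.foldl_mulVec_eq_prod_reverse_mulVec, prefixState, suffixMatrix,
    Matrix.mulVec_mulVec, ← List.prod_append, ← List.reverse_append, List.take_append_drop]

theorem prefixState_zero (init : Fin d → ℂ) (y : Fin n → Bool) : prefixState U init y 0 = init := by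
  simp [prefixState]

theorem prefixState_succ (init : Fin d → ℂ) (y : Fin n → Bool) {m : ℕ} (hm : m < n) :
    prefixState U init y (m + 1) = U ⟨m, hm⟩ (y ⟨m, hm⟩) *ᵥ prefixState U init y m := by
  simp [prefixState, stepMatrices, List.take_add_one, Matrix.mulVec_mulVec, hm]

theorem prefixState_congr (init : Fin d → ℂ) {y y' : Fin n → Bool} {m : ℕ}
    (h : ∀ i : Fin n, (i : ℕ) < m → y i = y' i) :
    prefixState U init y m = prefixState U init y' m := by
  rw [prefixState, prefixState, stepMatrices, stepMatrices,
    List.take_ofFn_congr fun i hi => congrArg (U i) (h i hi)]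

theorem suffixMatrix_congr {y y' : Fin n → Bool} {m : ℕ}
    (h : ∀ i : Fin n, m ≤ (i : ℕ) → y i = y' i) : suffixMatrix U y m = suffixMatrix U y' m := by
  rw [suffixMatrix, suffixMatrix, stepMatrices, stepMatrices,
    List.drop_ofFn_congr fun i hi => congrArg (U i) (h i hi)]

end Run

section LowerBound

variable {n k d : ℕ} {U : Fin n → Bool → Matrix (Fin d) (Fin d) ℂ} {π : Equiv.Perm (Fin n)}
  {init : Fin d → ℂ} {acc : Finset (Fin d)}

theorem nuAccepts_comp_symm_iff (hcomp : nuComputes U π init acc (EXACT n k)) (y : Fin n → Bool) :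
    nuAccepts U π init acc (y ∘ π.symm) ↔ countOnes y = k := by
  rw [hcomp, EXACT, decide_eq_true_eq, countOnes_comp_perm]

theorem prefixState_notMem_span (hk : k ≤ n) (hcomp : nuComputes U π init acc (EXACT n k))
    {j : ℕ} (hj : j < k) :
    prefixState U init (onesOn (range (j + 1))) (j + 1) ∉ Submodule.span ℂ
      (Set.range fun r : Fin (j + 1) => prefixState U init (onesOn (range r)) (j + 1)) := by
  set z : ℕ → Fin n → Bool := fun r => onesOn (range r ∪ Ico (j + 1) k)
  have hcount : ∀ r ≤ j + 1, countOnes (z r) = r + (k - (j + 1)) := by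
    intro r hr
    rw [countOnes_onesOn (by intro i; simp only [mem_union, mem_range, mem_Ico]; omega),
      card_union_of_disjoint (disjoint_left.2 (by intro i; simp only [mem_range, mem_Ico]; omega)),
      card_range, Nat.card_Ico]
  have hrun : ∀ r ≤ j + 1, nuRun U π init (z r ∘ π.symm) =
      suffixMatrix U (z (j + 1)) (j + 1) *ᵥ prefixState U init (onesOn (range r)) (j + 1) := by
    intro r hr
    rw [nuRun_comp_symm U π init (z r) (j + 1)]
    congr 1
    · exact suffixMatrix_congr U fun i hi => by
        simp only [z, onesOn, mem_union, mem_range, mem_Ico, decide_eq_decide]; omega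
    · exact prefixState_congr U init fun i hi => by
        simp only [z, onesOn, mem_union, mem_range, mem_Ico, decide_eq_decide]; omega
  obtain ⟨q, hq_acc, hq⟩ : nuAccepts U π init acc (z (j + 1) ∘ π.symm) := by
    rw [nuAccepts_comp_symm_iff hcomp, hcount _ le_rfl]
    omega
  let φ : (Fin d → ℂ) →ₗ[ℂ] ℂ :=
    LinearMap.proj q ∘ₗ (suffixMatrix U (z (j + 1)) (j + 1)).mulVecLin
  have hφ_eq : ∀ r ≤ j + 1, φ (prefixState U init (onesOn (range r)) (j + 1)) =
      nuRun U π init (z r ∘ π.symm) q := fun r hr => by simp [φ, hrun r hr]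
  have hφ_rejected : ∀ r : Fin (j + 1), φ (prefixState U init (onesOn (range r)) (j + 1)) = 0 := by
    intro r
    by_contra hne
    have hacc : nuAccepts U π init acc (z r ∘ π.symm) :=
      ⟨q, hq_acc, by rwa [← hφ_eq r r.is_lt.le]⟩
    rw [nuAccepts_comp_symm_iff hcomp, hcount r r.is_lt.le] at hacc
    omega
  have hφ_accepted : φ (prefixState U init (onesOn (range (j + 1))) (j + 1)) ≠ 0 := by
    rwa [hφ_eq _ le_rfl]
  intro hmem
  refine hφ_accepted (Submodule.span_le.2 ?_ hmem : _ ∈ LinearMap.ker φ)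
  rintro _ ⟨r, rfl⟩
  exact hφ_rejected r

theorem linearIndependent_prefixState_onesOn_range (hU : IsUnitaryFamily U) (hinit : init ≠ 0)
    (hk : k ≤ n) (hcomp : nuComputes U π init acc (EXACT n k)) :
    ∀ j ≤ k, LinearIndependent ℂ fun r : Fin (j + 1) => prefixState U init (onesOn (range r)) j
  | 0, _ => by
    simpa [linearIndependent_unique_iff, prefixState_zero] using hinit
  | j + 1, hj => by
    have hjn : j < n := by omega
    have htruncate :
        Fin.init (fun r : Fin (j + 2) => prefixState U init (onesOn (range r)) (j + 1)) =
          fun r : Fin (j + 1) => prefixState U init (onesOn (range r)) (j + 1) := rfl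
    rw [linearIndependent_finSucc', htruncate]
    refine ⟨?_, prefixState_notMem_span hk hcomp hj⟩
    have hstep : (fun r : Fin (j + 1) => prefixState U init (onesOn (range r)) (j + 1)) =
        (U ⟨j, hjn⟩ false).mulVecLin ∘
          fun r : Fin (j + 1) => prefixState U init (onesOn (range r)) j := by
      funext r
      simp [prefixState_succ U init _ hjn, onesOn, Nat.not_lt.2 r.is_le]
    have hinj : Function.Injective (U ⟨j, hjn⟩ false).mulVecLin :=
      Matrix.mulVec_injective_iff_isUnit.2 (Unitary.isUnit_coe (U := ⟨_, hU ⟨j, hjn⟩ false⟩))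
    rw [hstep]
    exact (linearIndependent_prefixState_onesOn_range hU hinit hk hcomp j (by omega)).map'
      _ (LinearMap.ker_eq_bot.2 hinj)

theorem succ_le_of_nuComputes_exact (hU : IsUnitaryFamily U) (hinit : init ≠ 0) (hk : k ≤ n)
    (hcomp : nuComputes U π init acc (EXACT n k)) : k + 1 ≤ d := by
  simpa using
    (linearIndependent_prefixState_onesOn_range hU hinit hk hcomp k le_rfl).fintype_card_le_finrank

theorem IsUnitaryFamily.flip (hU : IsUnitaryFamily U) : IsUnitaryFamily fun j b => U j !b :=
  fun j b => hU j !b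

theorem nuComputes_exact_flip (hk : k ≤ n) (hcomp : nuComputes U π init acc (EXACT n k)) :
    nuComputes (fun j b => U j !b) π init acc (EXACT n (n - k)) := by
  intro x
  have hrun : nuRun (fun j b => U j !b) π init x = nuRun U π init fun i => !x i := rfl
  rw [nuAccepts, hrun, ← nuAccepts, hcomp, EXACT, EXACT, decide_eq_true_eq, decide_eq_true_eq,
    countOnes_not]
  have := countOnes_le x
  omega

end LowerBound

theorem NormalizedInit.ne_zero {d : ℕ} {init : Fin d → ℂ} (h : NormalizedInit init) : init ≠ 0 := by
  rintro rfl
  simp [NormalizedInit] at h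

/-- For every `n` and every `k ≤ n`, the width of any nondeterministic unitary OBDD
computing `EXACT_n^k` is at least `max (k+1) (n-k+1)`. -/
theorem nuobdd_exact_lower_bound
    (n k d : ℕ) (hk : k ≤ n)
    (U : Fin n → Bool → Matrix (Fin d) (Fin d) ℂ)
    (hU : IsUnitaryFamily U)
    (π : Equiv.Perm (Fin n)) (init : Fin d → ℂ) (hinit : NormalizedInit init)
    (acc : Finset (Fin d))
    (hcomp : nuComputes U π init acc (EXACT n k)) :
    max (k + 1) (n - k + 1) ≤ d :=
  max_le (succ_le_of_nuComputes_exact hU hinit.ne_zero hk hcomp)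
    (succ_le_of_nuComputes_exact hU.flip hinit.ne_zero (Nat.sub_le n k)
      (nuComputes_exact_flip hk hcomp))
end
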